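/- Let (φ, b) solve φ' = (1 + b²)/(2h²), b' = 2bφ on (0, R] with b(R) ≠ 0 and h(t) = t + O(t³) near 0. Then there exist constants c₅, c₆ > 0 such that b(r)² ≥ b(R)²·e^{-c₆ + c₅/r²} for all sufficiently small r ∈ (0, R]. -/

import Mathlib

/-!
As `φ' ≥ 0`, `φ ≤ φ(R)`, so `b²` stays bounded below by a positive constant and `b` never
vanishes. A lower bound `φ' ≥ g'` integrates to `φ ≤ const + g`, and then `b² e^{-G}` is
antitone for `G' = 4g`, giving `b² ≥ K e^G`. Near `0`, `h = r + O(r³)` gives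
`1/h² ≥ 1/r² - 2C`; two rounds of this bootstrap suffice: `φ' ≥ 1/(2r²) - C` yields
`b² ≥ K/r²`, and then `φ' ≥ b²/(4r²) ≥ K/(4r⁴)` yields `b² ≥ K' e^{K/(6r²)}`.
-/

open Real Filter Set Topology

theorem monotoneOn_of_hasDerivAt_nonneg {D : Set ℝ} (hD : Convex ℝ D) {f f' : ℝ → ℝ}
    (hf : ∀ x ∈ D, HasDerivAt f (f' x) x) (hf' : ∀ x ∈ D, 0 ≤ f' x) : MonotoneOn f D :=
  monotoneOn_of_hasDerivWithinAt_nonneg hD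
    (fun x hx => (hf x hx).continuousAt.continuousWithinAt)
    (fun x hx => (hf x (interior_subset hx)).hasDerivWithinAt)
    (fun x hx => hf' x (interior_subset hx))

theorem antitoneOn_sq_mul_exp_neg {D : Set ℝ} (hD : Convex ℝ D) {b φ Ψ Ψ' : ℝ → ℝ}
    (hb : ∀ x ∈ D, HasDerivAt b (2 * b x * φ x) x) (hΨ : ∀ x ∈ D, HasDerivAt Ψ (Ψ' x) x)
    (hle : ∀ x ∈ D, 4 * φ x ≤ Ψ' x) : AntitoneOn (fun x => b x ^ 2 * exp (-Ψ x)) D := by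
  have hmono : MonotoneOn (fun x => -(b x ^ 2 * exp (-Ψ x))) D := by
    refine monotoneOn_of_hasDerivAt_nonneg hD (fun x hx => ?_) (fun x hx => ?_)
      (f' := fun x => b x ^ 2 * exp (-Ψ x) * (Ψ' x - 4 * φ x))
    · refine (((hb x hx).fun_pow 2).fun_mul (hΨ x hx).fun_neg.exp).fun_neg.congr_deriv ?_
      norm_num
      ring
    · have := hle x hx
      positivity
  exact fun x hx y hy hxy => neg_le_neg_iff.mp (hmono hx hy hxy)

theorem exists_pos_mul_exp_le_sq {φ φ' b g g' G : ℝ → ℝ} {a s : ℝ}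
    (hφ : ∀ r ∈ Ioc a s, HasDerivAt φ (φ' r) r)
    (hb : ∀ r ∈ Ioc a s, HasDerivAt b (2 * b r * φ r) r)
    (hg : ∀ r ∈ Ioc a s, HasDerivAt g (g' r) r)
    (hG : ∀ r ∈ Ioc a s, HasDerivAt G (4 * g r) r)
    (hg'φ' : ∀ r ∈ Ioc a s, g' r ≤ φ' r) (hbs : b s ≠ 0) :
    ∃ K > 0, ∀ r ∈ Ioc a s, K * exp (G r) ≤ b r ^ 2 := by
  set A := φ s - g s
  refine ⟨b s ^ 2 * exp (-G s - 4 * |A| * (s - a)), by positivity, fun r hr => ?_⟩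
  have hs : s ∈ Ioc a s := ⟨hr.1.trans_le hr.2, le_rfl⟩
  have hφg : MonotoneOn (fun x => φ x - g x) (Ioc a s) :=
    monotoneOn_of_hasDerivAt_nonneg (convex_Ioc a s) (fun x hx => (hφ x hx).sub (hg x hx))
      (fun x hx => sub_nonneg.mpr (hg'φ' x hx))
  have hΨ : ∀ x ∈ Ioc a s, HasDerivAt (fun x => G x + 4 * A * x) (4 * g x + 4 * A) x :=
    fun x hx => (hG x hx).add (by simpa using (hasDerivAt_id x).const_mul (4 * A))
  have hanti := antitoneOn_sq_mul_exp_neg (convex_Ioc a s) hb hΨ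
    (fun x hx => by linarith [hφg hx hs hx.2]) hr hs hr.2
  have hA : -(4 * |A| * (s - a)) ≤ 4 * A * (r - s) := by
    have : |A * (r - s)| ≤ |A| * (s - a) := by
      rw [abs_mul]
      gcongr
      rw [abs_le]
      constructor <;> linarith [hr.1, hr.2]
    linarith [neg_abs_le (A * (r - s))]
  calc b s ^ 2 * exp (-G s - 4 * |A| * (s - a)) * exp (G r)
      = b s ^ 2 * exp (-G s - 4 * |A| * (s - a) + G r) := by rw [mul_assoc, ← exp_add]
    _ ≤ b s ^ 2 * exp (-(G s + 4 * A * s) + (G r + 4 * A * r)) := by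
        gcongr b s ^ 2 * exp ?_
        linarith
    _ = b s ^ 2 * exp (-(G s + 4 * A * s)) * exp (G r + 4 * A * r) := by
        rw [exp_add, ← mul_assoc]
    _ ≤ b r ^ 2 * exp (-(G r + 4 * A * r)) * exp (G r + 4 * A * r) := by gcongr
    _ = b r ^ 2 := by rw [mul_assoc, ← exp_add, neg_add_cancel, exp_zero, mul_one]

theorem exists_pos_mul_exp_neg_le (B : ℝ) {K : ℝ} (hK : 0 < K) :
    ∃ c > 0, B * exp (-c) ≤ K := by
  refine ⟨|B| / K + 1, by positivity, ?_⟩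
  have h := add_one_le_exp (|B| / K + 1)
  rw [exp_neg, ← div_eq_mul_inv, div_le_iff₀ (exp_pos _)]
  calc B ≤ |B| := le_abs_self B
    _ ≤ K * (|B| / K + 1 + 1) := by rw [mul_add, mul_add, mul_div_cancel₀ _ hK.ne']; linarith
    _ ≤ K * exp (|B| / K + 1) := by gcongr

theorem one_div_sq_sub_le_one_div_sq {h r C : ℝ} (hr : 0 < r) (hCr : C * r ^ 2 < 1)
    (hh : |h - r| ≤ C * r ^ 3) : 1 / r ^ 2 - 2 * C ≤ 1 / h ^ 2 := by
  obtain ⟨hlo, hhi⟩ := abs_le.mp hh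
  have hC : 0 ≤ C := nonneg_of_mul_nonneg_left ((abs_nonneg _).trans hh) (by positivity)
  have hpos : 0 < h := by nlinarith
  have hsq : h ^ 2 ≤ r ^ 2 * (1 + C * r ^ 2) ^ 2 := by nlinarith
  have key : (1 - 2 * C * r ^ 2) * h ^ 2 ≤ r ^ 2 := by
    have hx : 0 ≤ C * r ^ 2 := by positivity
    rcases le_or_gt 0 (1 - 2 * C * r ^ 2) with hx' | hx'
    · calc (1 - 2 * C * r ^ 2) * h ^ 2
            ≤ (1 - 2 * C * r ^ 2) * (r ^ 2 * (1 + C * r ^ 2) ^ 2) := by gcongr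
        _ = r ^ 2 * (1 - 3 * (C * r ^ 2) ^ 2 - 2 * (C * r ^ 2) ^ 3) := by ring
        _ ≤ r ^ 2 := by
            have : 0 ≤ 3 * (C * r ^ 2) ^ 2 + 2 * (C * r ^ 2) ^ 3 := by positivity
            nlinarith [sq_nonneg r]
    · nlinarith [sq_nonneg h]
  rw [div_sub' (by positivity), div_le_div_iff₀ (by positivity) (by positivity)]
  nlinarith

theorem one_div_two_mul_sq_le_one_div_sq {h r C : ℝ} (hr : 0 < r) (hCr : 4 * C * r ^ 2 ≤ 1)
    (hh : |h - r| ≤ C * r ^ 3) : 1 / (2 * r ^ 2) ≤ 1 / h ^ 2 := by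
  refine le_trans ?_ (one_div_sq_sub_le_one_div_sq hr (by linarith) hh)
  rw [div_sub' (by positivity), div_le_div_iff₀ (by positivity) (by positivity)]
  nlinarith

theorem mul_one_div_sq_div_two_le {x z : ℝ} (y : ℝ) (hxz : x ≤ z) :
    x * (1 / y ^ 2) / 2 ≤ z / (2 * y ^ 2) := by
  rw [show z / (2 * y ^ 2) = z * (1 / y ^ 2) / 2 by ring]
  gcongr

def IsMonopoleODESolution (h φ b : ℝ → ℝ) (s : ℝ) : Prop :=
  ∀ r ∈ Ioc (0:ℝ) s,
    HasDerivAt φ ((1 + b r ^ 2) / (2 * h r ^ 2)) r ∧ HasDerivAt b (2 * b r * φ r) r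

namespace IsMonopoleODESolution

variable {h φ b : ℝ → ℝ} {s : ℝ}

theorem mono (hsol : IsMonopoleODESolution h φ b s) {t : ℝ} (hts : t ≤ s) :
    IsMonopoleODESolution h φ b t :=
  fun r hr => hsol r ⟨hr.1, hr.2.trans hts⟩

theorem ne_zero (hsol : IsMonopoleODESolution h φ b s) (hbs : b s ≠ 0) :
    ∀ r ∈ Ioc (0:ℝ) s, b r ≠ 0 := by
  obtain ⟨K, hK, hKb⟩ := exists_pos_mul_exp_le_sq (fun r hr => (hsol r hr).1)
    (fun r hr => (hsol r hr).2) (fun r _ => hasDerivAt_const r 0)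
    (fun r _ => by simp) (fun r _ => by positivity) hbs
    (g := 0) (G := 0)
  intro r hr
  have := hKb r hr
  simp only [Pi.zero_apply, exp_zero, mul_one] at this
  exact sq_pos_iff.mp (hK.trans_le this)

theorem exists_pos_div_sq_le_sq (hsol : IsMonopoleODESolution h φ b s) (hbs : b s ≠ 0)
    {C : ℝ} (hC : 0 ≤ C) (hh : ∀ r ∈ Ioc (0:ℝ) s, 1 / r ^ 2 - 2 * C ≤ 1 / h r ^ 2) :
    ∃ K > 0, ∀ r ∈ Ioc (0:ℝ) s, K / r ^ 2 ≤ b r ^ 2 := by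
  obtain ⟨K, hK, hKb⟩ := exists_pos_mul_exp_le_sq (fun r hr => (hsol r hr).1)
    (fun r hr => (hsol r hr).2)
    (g := fun r => -(1 / 2) * r⁻¹ - C * r) (G := fun r => -(2 * C * r ^ 2) - 2 * log r)
    (fun r hr => ((hasDerivAt_inv hr.1.ne').const_mul _).sub ((hasDerivAt_id r).const_mul C))
    (fun r hr => by
      refine ((((hasDerivAt_pow 2 r).const_mul (2 * C)).neg).sub
        ((hasDerivAt_log hr.1.ne').const_mul 2)).congr_deriv ?_
      ring)
    (fun r hr => by
      calc -(1 / 2) * -(r ^ 2)⁻¹ - C * 1 = (1 / r ^ 2 - 2 * C) / 2 := by ring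
        _ ≤ 1 * (1 / h r ^ 2) / 2 := by linarith [hh r hr]
        _ ≤ (1 + b r ^ 2) / (2 * h r ^ 2) := mul_one_div_sq_div_two_le _ (by nlinarith))
    hbs
  refine ⟨K * exp (-(2 * C * s ^ 2)), by positivity, fun r hr => ?_⟩
  have hexp : exp (-(2 * C * r ^ 2) - 2 * log r) = exp (-(2 * C * r ^ 2)) / r ^ 2 := by
    rw [exp_sub]
    congr 1
    rw [← exp_log (pow_pos hr.1 2), log_pow]
    norm_num
  calc K * exp (-(2 * C * s ^ 2)) / r ^ 2 ≤ K * exp (-(2 * C * r ^ 2)) / r ^ 2 := by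
        have := hr.1
        gcongr
        exact hr.2
    _ ≤ b r ^ 2 := by simpa only [hexp, mul_div_assoc] using hKb r hr

theorem exists_pos_mul_exp_div_sq_le_sq (hsol : IsMonopoleODESolution h φ b s) (hbs : b s ≠ 0)
    (hh : ∀ r ∈ Ioc (0:ℝ) s, 1 / (2 * r ^ 2) ≤ 1 / h r ^ 2) {K : ℝ}
    (hKb : ∀ r ∈ Ioc (0:ℝ) s, K / r ^ 2 ≤ b r ^ 2) :
    ∃ K' > 0, ∀ r ∈ Ioc (0:ℝ) s, K' * exp (K / 6 / r ^ 2) ≤ b r ^ 2 := by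
  obtain ⟨K', hK', hK'b⟩ := exists_pos_mul_exp_le_sq (fun r hr => (hsol r hr).1)
    (fun r hr => (hsol r hr).2)
    (g := fun r => -(K / 12) * (r ^ 3)⁻¹) (G := fun r => K / 6 * (r ^ 2)⁻¹)
    (fun r hr => ((hasDerivAt_pow 3 r).inv (pow_ne_zero 3 hr.1.ne')).const_mul _)
    (fun r hr => by
      refine (((hasDerivAt_pow 2 r).inv (pow_ne_zero 2 hr.1.ne')).const_mul _).congr_deriv ?_
      have := hr.1.ne'
      field_simp
      ring)
    (fun r hr => by
      have := hr.1
      calc -(K / 12) * (-(↑3 * r ^ (3 - 1)) / (r ^ 3) ^ 2)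
            = K / r ^ 2 * (1 / (2 * r ^ 2)) / 2 := by
            field_simp
            ring
        _ ≤ b r ^ 2 * (1 / h r ^ 2) / 2 := by
            gcongr ?_ / 2
            exact mul_le_mul (hKb r hr) (hh r hr) (by positivity) (sq_nonneg _)
        _ ≤ (1 + b r ^ 2) / (2 * h r ^ 2) := mul_one_div_sq_div_two_le _ (by linarith))
    hbs
  exact ⟨K', hK', fun r hr => by simpa only [div_eq_mul_inv] using hK'b r hr⟩

end IsMonopoleODESolution

theorem b_exponential_lower_bound_general
    (h φ b : ℝ → ℝ) (R : ℝ) (hR : 0 < R)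
    (hhasymp : ∃ C t₁ : ℝ, 0 < C ∧ 0 < t₁ ∧
      ∀ t ∈ Ioc (0:ℝ) t₁, |h t - t| ≤ C * t ^ 3)
    (hODE : ∀ r ∈ Ioc (0:ℝ) R,
      HasDerivAt φ ((1 + b r ^ 2) / (2 * h r ^ 2)) r ∧
      HasDerivAt b (2 * b r * φ r) r)
    (hbR : b R ≠ 0) :
    ∃ c₅ c₆ ε : ℝ, 0 < c₅ ∧ 0 < c₆ ∧ 0 < ε ∧ ε ≤ R ∧
      ∀ r ∈ Ioc (0:ℝ) ε,
        b R ^ 2 * Real.exp (-c₆ + c₅ / r ^ 2) ≤ b r ^ 2 := by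
  obtain ⟨C, t₁, hC, ht₁, hasymp⟩ := hhasymp
  have hCt : Tendsto (fun t : ℝ => 4 * C * t ^ 2) (𝓝[>] 0) (𝓝 0) :=
    ((continuous_const.mul (continuous_pow 2)).tendsto' 0 0 (by simp)).mono_left
      nhdsWithin_le_nhds
  obtain ⟨t₀, ht₀, hsmall⟩ := mem_nhdsGT_iff_exists_Ioc_subset.mp <| show
      {t | t ≤ R ∧ |h t - t| ≤ C * t ^ 3 ∧ 4 * C * t ^ 2 ≤ 1} ∈ 𝓝[>] (0:ℝ) by
    filter_upwards [Ioc_mem_nhdsGT hR, Ioc_mem_nhdsGT ht₁,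
      hCt.eventually (eventually_le_nhds one_pos)] with t htR ht₁ htC
    exact ⟨htR.2, hasymp t ht₁, htC⟩
  have ht₀R : t₀ ≤ R := (hsmall ⟨ht₀, le_rfl⟩).1
  have hsol : IsMonopoleODESolution h φ b t₀ := IsMonopoleODESolution.mono hODE ht₀R
  have hbt₀ : b t₀ ≠ 0 := IsMonopoleODESolution.ne_zero hODE hbR t₀ ⟨ht₀, ht₀R⟩
  obtain ⟨K, hK, hKb⟩ := hsol.exists_pos_div_sq_le_sq hbt₀ hC.le fun r hr =>
    one_div_sq_sub_le_one_div_sq hr.1 (by linarith [(hsmall hr).2.2]) (hsmall hr).2.1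
  obtain ⟨K', hK', hK'b⟩ := hsol.exists_pos_mul_exp_div_sq_le_sq hbt₀
    (fun r hr => one_div_two_mul_sq_le_one_div_sq hr.1 (hsmall hr).2.2 (hsmall hr).2.1) hKb
  obtain ⟨c₆, hc₆, hc₆K'⟩ := exists_pos_mul_exp_neg_le (b R ^ 2) hK'
  refine ⟨K / 6, c₆, t₀, by positivity, hc₆, ht₀, ht₀R, fun r hr => ?_⟩
  calc b R ^ 2 * exp (-c₆ + K / 6 / r ^ 2) = b R ^ 2 * exp (-c₆) * exp (K / 6 / r ^ 2) := by
        rw [exp_add, mul_assoc]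
    _ ≤ K' * exp (K / 6 / r ^ 2) := by gcongr
    _ ≤ b r ^ 2 := hK'b r hr

/-- For a solution of `φ' = (1 + b²)/(2h²)`, `b' = 2bφ` on
`(0, R]` with `b(R) ≠ 0` and `h(t) = t + O(t³)` near `0`, there exist
`c₅, c₆ > 0` with `b(r)² ≥ b(R)²·e^{-c₆ + c₅/r²}` for all small `r ∈ (0, R]`. -/
theorem b_exponential_lower_bound
    (h φ b : ℝ → ℝ) (R : ℝ) (hR : 0 < R)
    (hhpos : ∀ t ∈ Ioi (0:ℝ), 0 < h t)
    (hhasymp : ∃ C t₁ : ℝ, 0 < C ∧ 0 < t₁ ∧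
      ∀ t ∈ Ioc (0:ℝ) t₁, |h t - t| ≤ C * t ^ 3)
    (hODE : ∀ r ∈ Ioc (0:ℝ) R,
      HasDerivAt φ ((1 + b r ^ 2) / (2 * h r ^ 2)) r ∧
      HasDerivAt b (2 * b r * φ r) r)
    (hbR : b R ≠ 0) :
    ∃ c₅ c₆ ε : ℝ, 0 < c₅ ∧ 0 < c₆ ∧ 0 < ε ∧ ε ≤ R ∧
      ∀ r ∈ Ioc (0:ℝ) ε,
        b R ^ 2 * Real.exp (-c₆ + c₅ / r ^ 2) ≤ b r ^ 2 :=
  b_exponential_lower_bound_general h φ b R hR hhasymp hODE hbR
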